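/- Over any field of characteristic ≠ 2, for the pencil with A = r·F + G, B = s·F + G where F = y² − xz and G = x² + b y² + c xy + yz (as symmetric 3×3 matrices), the r-discriminant of the quadratic (in r) polynomial H₂ arising from Cayley's criterion factors as δ(s) = 16·(s³ + b s² + c s + 1)² · ((b² − 3c) s² + (bc − 9) s + (c² − 3b)). -/

import Mathlib

/-!
Since `t A + B = (1 + t) G + (s + r t) F` and `det (u G + w F) = -(u³ + c u² w + b u w² + w³) / 4`,
`-4 Δ` is the binary cubic `u³ + c u² w + b u w² + w³` restricted to the line
`(u, w) = (1 + t, s + r t)`. This makes the coefficients of `Δ`, hence `H₂`, explicit polynomials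
in `b, c, r, s`, and the factorization of the discriminant becomes a polynomial identity.
-/

open Polynomial

/-- The symmetric matrix of the conic `α F + G` where `F = y² - xz` and
`G = x² + b y² + c xy + yz`. -/
noncomputable def pencilMat (K : Type*) [Field K] (b c α : K) :
    Matrix (Fin 3) (Fin 3) K :=
  Matrix.of ![![1, c / 2, -α / 2], ![c / 2, b + α, 1 / 2], ![-α / 2, 1 / 2, 0]]

/-- `Δ(t) = det (t A + B)` as a polynomial in `t`, where `A`, `B` are the matrices
of the conics `r F + G` and `s F + G`. -/
noncomputable def cayleyDelta (K : Type*) [Field K] (b c r s : K) : K[X] :=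
  ((X : K[X]) • (pencilMat K b c r).map C + (pencilMat K b c s).map C).det

section LineCubic

variable {R : Type*} [CommRing R]

def lineCubic (b c r s : R) : Cubic R :=
  ⟨1 + c * r + b * r ^ 2 + r ^ 3, 3 + c * (2 * r + s) + b * (r ^ 2 + 2 * r * s) + 3 * r ^ 2 * s,
    3 + c * (r + 2 * s) + b * (2 * r * s + s ^ 2) + 3 * r * s ^ 2, 1 + c * s + b * s ^ 2 + s ^ 3⟩

theorem lineCubic_toPoly (b c r s : R) :
    (lineCubic b c r s).toPoly =
      (X + 1) ^ 3 + C c * (X + 1) ^ 2 * (C r * X + C s) + C b * (X + 1) * (C r * X + C s) ^ 2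
        + (C r * X + C s) ^ 3 := by
  simp only [lineCubic, Cubic.toPoly, map_add, map_mul, map_pow, map_one, map_ofNat]
  ring

end LineCubic

section CayleyDelta

variable {K : Type*} [Field K] (h2 : (2 : K) ≠ 0) (b c r s : K)
include h2

theorem four_mul_cayleyDelta : C 4 * cayleyDelta K b c r s = -(lineCubic b c r s).toPoly := by
  have half : (2 : K[X]) * C 2⁻¹ = 1 := by
    rw [← map_ofNat C 2, ← map_mul, mul_inv_cancel₀ h2, map_one]
  rw [lineCubic_toPoly]
  simp only [cayleyDelta, pencilMat, Matrix.det_fin_three, Matrix.add_apply, Matrix.smul_apply,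
    Matrix.map_apply, Matrix.of_apply, Matrix.cons_val', Matrix.cons_val_zero, Matrix.cons_val_one,
    Matrix.head_cons, Matrix.cons_val_fin_one, Matrix.cons_val_two, Matrix.tail_cons,
    Matrix.empty_val', Matrix.head_fin_const, smul_eq_mul, div_eq_mul_inv, map_mul, map_neg,
    map_add, map_one, map_zero, map_ofNat]
  set h : K[X] := C 2⁻¹
  set u : K[X] := X + 1
  set w : K[X] := C r * X + C s
  -- the determinant is `-h² (u³ + b u w² + w³) - 2 h³ c u² w`, to be compared at `h = 1/2`
  linear_combination
    (-(1 + 2 * h) * (u ^ 3 + C b * u * w ^ 2 + w ^ 3) - (1 + 2 * h + 4 * h ^ 2) * C c * u ^ 2 * w)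
      * half

theorem four_mul_coeff_cayleyDelta (n : ℕ) :
    4 * (cayleyDelta K b c r s).coeff n = -(lineCubic b c r s).toPoly.coeff n := by
  simpa only [coeff_C_mul, coeff_neg] using congrArg (coeff · n) (four_mul_cayleyDelta h2 b c r s)

theorem cayleyDelta_coeff_combination :
    16 * (4 * (cayleyDelta K b c r s).coeff 0 * (cayleyDelta K b c r s).coeff 2
      - (cayleyDelta K b c r s).coeff 1 ^ 2) =
      4 * (lineCubic b c r s).d * (lineCubic b c r s).b - (lineCubic b c r s).c ^ 2 := by
  have e0 := four_mul_coeff_cayleyDelta h2 b c r s 0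
  have e1 := four_mul_coeff_cayleyDelta h2 b c r s 1
  have e2 := four_mul_coeff_cayleyDelta h2 b c r s 2
  rw [Cubic.coeff_eq_d] at e0
  rw [Cubic.coeff_eq_c] at e1
  rw [Cubic.coeff_eq_b] at e2
  linear_combination 16 * (cayleyDelta K b c r s).coeff 2 * e0 - 4 * (lineCubic b c r s).d * e2
    - (4 * (cayleyDelta K b c r s).coeff 1 - (lineCubic b c r s).c) * e1

end CayleyDelta

/-- For the class (18) pencil with `F = y² - xz`, `G = x² + by² + cxy + yz`, the
Cayley polynomial `H₂` (the suitably normalized `4 d₀ d₂ - d₁²`, where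
`Δ(t) = d₀ + d₁ t + d₂ t² + d₃ t³`) is a quadratic `h₀ r² + h₁ r + h₂` in `r`
with `h₀ = 3s⁴ + 4bs³ + 6cs² + 12s + 4b - c²`, and its `r`-discriminant factors
as `16 (s³ + bs² + cs + 1)² ((b² - 3c)s² + (bc - 9)s + (c² - 3b))`. -/
theorem stmt10 (K : Type*) [Field K] (h2 : (2 : K) ≠ 0) (b c : K) :
    ∃ h₁ h₂ : K → K,
      (∀ r s : K,
          16 * (4 * (cayleyDelta K b c r s).coeff 0 * (cayleyDelta K b c r s).coeff 2
              - (cayleyDelta K b c r s).coeff 1 ^ 2) =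
            (3 * s ^ 4 + 4 * b * s ^ 3 + 6 * c * s ^ 2 + 12 * s + 4 * b - c ^ 2) * r ^ 2
              + h₁ s * r + h₂ s) ∧
      (∀ s : K,
          (h₁ s) ^ 2 -
              4 * (3 * s ^ 4 + 4 * b * s ^ 3 + 6 * c * s ^ 2 + 12 * s + 4 * b - c ^ 2)
                * h₂ s =
            16 * (s ^ 3 + b * s ^ 2 + c * s + 1) ^ 2 *
              ((b ^ 2 - 3 * c) * s ^ 2 + (b * c - 9) * s + (c ^ 2 - 3 * b))) := by
  refine ⟨fun s => 2 * b * s ^ 4 + (4 * b ^ 2 - 4 * c) * s ^ 3 + (6 * b * c - 18) * s ^ 2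
      + (4 * c ^ 2 - 4 * b) * s + 2 * c,
    fun s => (4 * c - b ^ 2) * s ^ 4 + 12 * s ^ 3 + 6 * b * s ^ 2 + 4 * c * s + 3,
    fun r s => ?_, fun s => by ring⟩
  rw [cayleyDelta_coeff_combination h2]
  simp only [lineCubic]
  ring
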